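/- Unisolvence of the local stress degrees of freedom: let E ⊂ ℝ² be a polygon and k ≥ 1. If τ_h ∈ Σ_h(E) satisfies ∫_e (τ_h n)·p_k = 0 for all p_k ∈ P_k(e)² and all edges e ⊂ ∂E, and ∫_E div(τ_h)·ψ_k = 0 for all ψ_k ∈ RM_k^⊥(E), then τ_h = 0. -/

import Mathlib

open MeasureTheory Matrix

noncomputable section

abbrev Pt : Type := Fin 2 → ℝ
abbrev M2 : Type := Matrix (Fin 2) (Fin 2) ℝ

/-- clockwise rotation: (c₁,c₂) ↦ (c₂,-c₁) -/
def perp (c : Pt) : Pt := ![c 1, -c 0]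

/-- infinitesimal rigid body motion x ↦ a + b (x - x_C)^⊥ -/
def rigid (xC a : Pt) (b : ℝ) : Pt → Pt := fun x => a + b • perp (x - xC)

/-- the set RM(E) of rigid body motions (with centroid x_C) -/
def RMset (xC : Pt) : Set (Pt → Pt) := {f | ∃ a b, f = rigid xC a b}

/-- vector-valued polynomial of total degree ≤ k -/
def IsVPoly (k : ℕ) (f : Pt → Pt) : Prop :=
  ∃ P : Fin 2 → MvPolynomial (Fin 2) ℝ,
    (∀ i, (P i).totalDegree ≤ k) ∧ ∀ x i, f x i = MvPolynomial.eval x (P i)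

/-- partial derivative ∂_j g -/
def pd (j : Fin 2) (g : Pt → ℝ) (x : Pt) : ℝ := fderiv ℝ g x (Pi.single j 1)

/-- symmetric gradient ε(v) = (∇v + ∇vᵀ)/2 -/
def sgrad (v : Pt → Pt) (x : Pt) : M2 :=
  Matrix.of fun i j => (pd j (fun y => v y i) x + pd i (fun y => v y j) x) / 2

/-- row-wise divergence of a matrix field -/
def mdiv (τ : Pt → M2) (x : Pt) : Pt := fun i => ∑ j, pd j (fun y => τ y i j) x

/-- Frobenius inner product A : B -/
def frob (A B : M2) : ℝ := ∑ i, ∑ j, A i j * B i j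
/-- parametrization of the edge with endpoints A, B -/
def edgeParam (A B : Pt) (t : ℝ) : Pt := A + t • (B - A)

/-- an ℝ²-valued polynomial of degree ≤ k in the edge parameter -/
def IsEdgePoly (k : ℕ) (g : ℝ → Pt) : Prop :=
  ∃ q : Fin 2 → Polynomial ℝ, (∀ i, (q i).natDegree ≤ k) ∧
    ∀ (t : ℝ) (i : Fin 2), g t i = (q i).eval t

/-- membership in the local VEM stress space Σ_h(E): τ = Cε(w) for some
displacement w, the normal trace on each edge is a polynomial of degree ≤ k,
and div τ is a polynomial of degree ≤ k.  The polygon E has nE edges with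
endpoints A e, B e and (length-scaled) outward normals nu e. -/
def InSigmaH {nE : ℕ} (k : ℕ) (A B nu : Fin nE → Pt) (C : M2 →ₗ[ℝ] M2)
    (τ : Pt → M2) : Prop :=
  (∃ w : Pt → Pt, ContDiff ℝ 2 w ∧ ∀ x, τ x = C (sgrad w x)) ∧
  (∀ e : Fin nE,
    IsEdgePoly k (fun t => (τ (edgeParam (A e) (B e) t)).mulVec (nu e))) ∧
  IsVPoly k (mdiv τ)

/-!
On each edge τn is a polynomial of degree ≤ k, so testing the edge moments with τn itself
gives τn = 0 on ∂E. The divergence theorem applied to τᵀv then yields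
∫_E (div τ · v + τ : ∇v) = 0 for every C¹ field v. For a rigid motion r the gradient ∇r is skew
while τ = Cε(w) is symmetric, so div τ ⟂ RM(E); hence div τ is itself an admissible test
function for the interior moments, and div τ = 0. Taking v = w finally gives
∫_E Cε(w) : ε(w) = 0, and positivity of C forces ε(w) = 0, i.e. τ = 0. Each integral identity
becomes a pointwise one because the integrands are continuous and nonnegative on an open set.
-/

section Vanishing

variable {X : Type*} [TopologicalSpace X] [T2Space X] [MeasurableSpace X]
  [OpensMeasurableSpace X] {μ : Measure X} [IsFiniteMeasureOnCompacts μ] [μ.IsOpenPosMeasure]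
  {U : Set X}

theorem eqOn_zero_of_setIntegral_eq_zero {g : X → ℝ} (hU : IsOpen U)
    (hUc : IsCompact (closure U)) (hg : Continuous g) (hnn : ∀ x ∈ U, 0 ≤ g x)
    (h0 : ∫ x in U, g x ∂μ = 0) : Set.EqOn g 0 U := by
  have hint : IntegrableOn g U μ :=
    (hg.continuousOn.integrableOn_compact hUc).mono_set subset_closure
  have hae := (setIntegral_eq_zero_iff_of_nonneg_ae
    (ae_restrict_of_forall_mem hU.measurableSet hnn) hint).1 h0
  exact Measure.eqOn_open_of_ae_eq hae hU hg.continuousOn continuousOn_const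

theorem eqOn_zero_of_setIntegral_dotProduct_self_eq_zero {ι : Type*} [Fintype ι]
    {f : X → ι → ℝ} (hU : IsOpen U) (hUc : IsCompact (closure U)) (hf : Continuous f)
    (h0 : ∫ x in U, f x ⬝ᵥ f x ∂μ = 0) : Set.EqOn f 0 U := fun _ hx =>
  dotProduct_self_eq_zero.1 <| eqOn_zero_of_setIntegral_eq_zero hU hUc (hf.dotProduct hf)
    (fun _ _ => Fintype.sum_nonneg fun _ => mul_self_nonneg _) h0 hx

end Vanishing

theorem Polynomial.eq_zero_of_intervalIntegral_dotProduct_self_eq_zero {ι : Type*}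
    [Fintype ι] (q : ι → Polynomial ℝ)
    (h : ∫ t in (0:ℝ)..1, (fun i => (q i).eval t) ⬝ᵥ (fun i => (q i).eval t) = 0) :
    q = 0 := by
  rw [intervalIntegral.integral_of_le zero_le_one, integral_Ioc_eq_integral_Ioo] at h
  have hIoo := eqOn_zero_of_setIntegral_dotProduct_self_eq_zero isOpen_Ioo
    (Metric.isBounded_Ioo 0 1).isCompact_closure (continuous_pi fun i => (q i).continuous) h
  funext i
  exact Polynomial.eq_zero_of_infinite_isRoot _
    ((Set.Ioo_infinite zero_lt_one).mono fun t ht => congrFun (hIoo ht) i)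

theorem IsEdgePoly.eq_zero_of_moments_eq_zero {k : ℕ} {g : ℝ → Pt} (hg : IsEdgePoly k g)
    (hmom : ∀ q : Fin 2 → Polynomial ℝ, (∀ i, (q i).natDegree ≤ k) →
      ∫ t in (0:ℝ)..1, g t ⬝ᵥ (fun i => (q i).eval t) = 0) : g = 0 := by
  obtain ⟨q, hdeg, hq⟩ := hg
  obtain rfl : g = fun t i => (q i).eval t := funext fun t => funext (hq t)
  obtain rfl := Polynomial.eq_zero_of_intervalIntegral_dotProduct_self_eq_zero q (hmom q hdeg)
  funext t i
  simp

theorem contDiff_pd {m n : WithTop ℕ∞} {g : Pt → ℝ} (hg : ContDiff ℝ n g) (hmn : m + 1 ≤ n)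
    (j : Fin 2) : ContDiff ℝ m (pd j g) :=
  (ContinuousLinearMap.apply ℝ ℝ (Pi.single j (1 : ℝ) : Pt)).contDiff.comp (hg.fderiv_right hmn)

theorem pd_mul {f g : Pt → ℝ} {x : Pt} (hf : DifferentiableAt ℝ f x)
    (hg : DifferentiableAt ℝ g x) (j : Fin 2) :
    pd j (fun y => f y * g y) x = pd j f x * g x + f x * pd j g x := by
  simp only [pd, fderiv_fun_mul hf hg, _root_.add_apply,
    FunLike.coe_smul, Pi.smul_apply, smul_eq_mul]
  ring

theorem pd_sum {ι : Type*} (s : Finset ι) {f : ι → Pt → ℝ} {x : Pt}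
    (hf : ∀ i ∈ s, DifferentiableAt ℝ (f i) x) (j : Fin 2) :
    pd j (fun y => ∑ i ∈ s, f i y) x = ∑ i ∈ s, pd j (f i) x := by
  simp [pd, fderiv_fun_sum hf]

theorem pd_rigid (xC a : Pt) (b : ℝ) (i j : Fin 2) (x : Pt) :
    pd j (fun y => rigid xC a b y i) x = b * perp (Pi.single j 1) i := by
  fin_cases i
  · have h := ((hasFDerivAt_apply (𝕜 := ℝ) 1 x).sub_const (xC 1)).const_mul b
    simp [pd, rigid, perp, h.fderiv]
  · have h := ((hasFDerivAt_apply (𝕜 := ℝ) 0 x).const_sub (xC 0)).const_mul b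
    simp [pd, rigid, perp, h.fderiv]

theorem contDiff_rigid (xC a : Pt) (b : ℝ) {n : WithTop ℕ∞} : ContDiff ℝ n (rigid xC a b) := by
  refine contDiff_pi.2 fun i => ?_
  fin_cases i <;>
    simp only [rigid, perp, Pi.add_apply, Pi.sub_apply, smul_cons, smul_eq_mul, smul_empty,
      Fin.zero_eta, Fin.mk_one, cons_val_zero, cons_val_one, cons_val_fin_one] <;>
    fun_prop

theorem sum_pd_transpose_mulVec {τ : Pt → M2} {v : Pt → Pt} {x : Pt}
    (hτ : ∀ i j, DifferentiableAt ℝ (fun y => τ y i j) x) (hv : DifferentiableAt ℝ v x) :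
    ∑ j, pd j (fun y => ((τ y)ᵀ *ᵥ v y) j) x
      = mdiv τ x ⬝ᵥ v x + ∑ i, ∑ j, τ x i j * pd j (fun y => v y i) x := by
  have hvi := differentiableAt_pi.1 hv
  have hterm : ∀ j, pd j (fun y => ((τ y)ᵀ *ᵥ v y) j) x
      = ∑ i, (pd j (fun y => τ y i j) x * v x i + τ x i j * pd j (fun y => v y i) x) := by
    intro j
    simp only [mulVec, dotProduct, transpose_apply]
    rw [pd_sum Finset.univ (f := fun i y => τ y i j * v y i) fun i _ => (hτ i j).mul (hvi i)]
    exact Finset.sum_congr rfl fun i _ => pd_mul (hτ i j) (hvi i) j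
  simp only [hterm, Finset.sum_add_distrib, mdiv, dotProduct, Finset.sum_mul]
  congr 1 <;> exact Finset.sum_comm

theorem sum_mul_pd_rigid_eq_zero {σ : M2} (hσ : σᵀ = σ) (xC a : Pt) (b : ℝ) (x : Pt) :
    ∑ i, ∑ j, σ i j * pd j (fun y => rigid xC a b y i) x = 0 := by
  have h01 : σ 1 0 = σ 0 1 := by rw [← transpose_apply σ 0 1, hσ]
  simp [Fin.sum_univ_two, pd_rigid, perp, h01]

theorem frob_sgrad_of_transpose_eq {σ : M2} (hσ : σᵀ = σ) (v : Pt → Pt) (x : Pt) :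
    frob σ (sgrad v x) = ∑ i, ∑ j, σ i j * pd j (fun y => v y i) x := by
  have h01 : σ 1 0 = σ 0 1 := by rw [← transpose_apply σ 0 1, hσ]
  simp only [frob, sgrad, of_apply, Fin.sum_univ_two, h01]
  ring

theorem contDiff_sgrad_apply {m n : WithTop ℕ∞} {v : Pt → Pt} (hv : ContDiff ℝ n v)
    (hmn : m + 1 ≤ n) (i j : Fin 2) : ContDiff ℝ m fun x => sgrad v x i j := by
  have hvi := contDiff_pi.1 hv
  exact ((contDiff_pd (hvi i) hmn j).add (contDiff_pd (hvi j) hmn i)).div_const 2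

theorem contDiff_linearMap_apply {n : WithTop ℕ∞} (C : M2 →ₗ[ℝ] M2) {σ : Pt → M2}
    (hσ : ∀ a b, ContDiff ℝ n fun x => σ x a b) (i j : Fin 2) :
    ContDiff ℝ n fun x => C (σ x) i j := by
  have hC : ∀ M : M2, C M i j = ∑ a, ∑ b, M a b * C (single a b 1) i j := by
    intro M
    have hs : ∀ a b, single a b (M a b) = M a b • single a b (1 : ℝ) := by simp [smul_single]
    conv_lhs => rw [matrix_eq_sum_single M]
    simp only [hs, map_sum, map_smul, Matrix.sum_apply, Matrix.smul_apply, smul_eq_mul]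
  rw [show (fun x => C (σ x) i j) = _ from funext fun x => hC (σ x)]
  fun_prop

theorem sgrad_transpose (v : Pt → Pt) (x : Pt) : (sgrad v x)ᵀ = sgrad v x := by
  ext i j
  simp only [transpose_apply, sgrad, of_apply]
  ring

theorem continuous_mdiv {τ : Pt → M2} (hτ : ∀ i j, ContDiff ℝ 1 fun x => τ x i j) :
    Continuous (mdiv τ) :=
  continuous_pi fun i => continuous_finsetSum _ fun j _ =>
    (contDiff_pd (m := 0) (hτ i j) (zero_add 1).le j).continuous

theorem integral_mdiv_dotProduct_add_eq_zero {nE : ℕ} {E : Set Pt} {A B nu : Fin nE → Pt}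
    (hdivthm : ∀ F : Pt → Pt, ContDiff ℝ 1 F →
      (∫ x in E, ∑ j, pd j (fun y => F y j) x) =
        ∑ e : Fin nE, ∫ t in (0:ℝ)..1, F (edgeParam (A e) (B e) t) ⬝ᵥ nu e)
    {τ : Pt → M2} (hτ : ∀ i j, ContDiff ℝ 1 fun x => τ x i j)
    (hτn : ∀ e t, τ (edgeParam (A e) (B e) t) *ᵥ nu e = 0)
    {v : Pt → Pt} (hv : ContDiff ℝ 1 v) :
    ∫ x in E, (mdiv τ x ⬝ᵥ v x + ∑ i, ∑ j, τ x i j * pd j (fun y => v y i) x) = 0 := by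
  have hvi := contDiff_pi.1 hv
  have hF : ContDiff ℝ 1 fun x => (τ x)ᵀ *ᵥ v x := by
    refine contDiff_pi.2 fun j => ?_
    simp only [mulVec, dotProduct, transpose_apply]
    fun_prop
  have hbdry : ∀ e t, (τ (edgeParam (A e) (B e) t))ᵀ *ᵥ v (edgeParam (A e) (B e) t) ⬝ᵥ nu e
      = 0 := by
    intro e t
    rw [mulVec_transpose, ← dotProduct_mulVec, hτn, dotProduct_zero]
  have hgreen := hdivthm _ hF
  simp only [hbdry, intervalIntegral.integral_zero, Finset.sum_const_zero] at hgreen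
  rw [← hgreen]
  congr 1 with x
  exact (sum_pd_transpose_mulVec (fun i j => ((hτ i j).differentiable one_ne_zero).differentiableAt)
    (hv.differentiable one_ne_zero).differentiableAt).symm

theorem eqOn_zero_of_setIntegral_frob_eq_zero {E : Set Pt} (hEo : IsOpen E)
    (hEb : Bornology.IsBounded E) {C : M2 →ₗ[ℝ] M2}
    (hCpos : ∀ σ : M2, σᵀ = σ → σ ≠ 0 → 0 < frob (C σ) σ) {σ : Pt → M2}
    (hσ : ∀ i j, Continuous fun x => σ x i j) (hσsymm : ∀ x, (σ x)ᵀ = σ x)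
    (h0 : ∫ x in E, frob (C (σ x)) (σ x) = 0) : Set.EqOn σ 0 E := by
  have hnn : ∀ x, 0 ≤ frob (C (σ x)) (σ x) := fun x => by
    rcases eq_or_ne (σ x) 0 with h | h
    · simp [h, frob]
    · exact (hCpos _ (hσsymm x) h).le
  have hCσ i j := (contDiff_linearMap_apply C (fun a b => contDiff_zero.2 (hσ a b)) i j).continuous
  have hcont : Continuous fun x => frob (C (σ x)) (σ x) :=
    continuous_finsetSum _ fun i _ => continuous_finsetSum _ fun j _ => (hCσ i j).mul (hσ i j)
  have hz := eqOn_zero_of_setIntegral_eq_zero hEo hEb.isCompact_closure hcont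
    (fun x _ => hnn x) h0
  intro x hx
  by_contra h
  exact (hCpos _ (hσsymm x) h).ne' (hz hx)

theorem unisolvence_local_stress_dofs_general
    (k : ℕ) (nE : ℕ)
    (E : Set Pt) (hEo : IsOpen E)
    (hEb : Bornology.IsBounded E) (xC : Pt)
    (A B nu : Fin nE → Pt)
    (hdivthm : ∀ F : Pt → Pt, ContDiff ℝ 1 F →
      (∫ x in E, ∑ j, pd j (fun y => F y j) x) =
        ∑ e : Fin nE, ∫ t in (0:ℝ)..1, F (edgeParam (A e) (B e) t) ⬝ᵥ nu e)
    (C : M2 →ₗ[ℝ] M2)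
    (hCsymval : ∀ σ : M2, σᵀ = σ → (C σ)ᵀ = C σ)
    (hCpos : ∀ σ : M2, σᵀ = σ → σ ≠ 0 → 0 < frob (C σ) σ)
    (τ : Pt → M2) (hτ : InSigmaH k A B nu C τ)
    (hedge : ∀ e : Fin nE, ∀ q : Fin 2 → Polynomial ℝ, (∀ i, (q i).natDegree ≤ k) →
      (∫ t in (0:ℝ)..1,
        ((τ (edgeParam (A e) (B e) t)).mulVec (nu e)) ⬝ᵥ (fun i => (q i).eval t)) = 0)
    (hinterior : ∀ ψ : Pt → Pt, IsVPoly k ψ →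
      (∀ r ∈ RMset xC, ∫ x in E, ψ x ⬝ᵥ r x = 0) →
      (∫ x in E, (mdiv τ x) ⬝ᵥ ψ x) = 0) :
    ∀ x ∈ E, τ x = 0 := by
  obtain ⟨⟨w, hw, hτw⟩, hτ_edge, hτ_div⟩ := hτ
  obtain rfl : τ = fun x => C (sgrad w x) := funext hτw
  have hsymm : ∀ x, (C (sgrad w x))ᵀ = C (sgrad w x) := fun x =>
    hCsymval _ (sgrad_transpose w x)
  have hτC1 := contDiff_linearMap_apply C (contDiff_sgrad_apply (m := 1) hw one_add_one_eq_two.le)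
  have hτn : ∀ e t, C (sgrad w (edgeParam (A e) (B e) t)) *ᵥ nu e = 0 := fun e =>
    congrFun ((hτ_edge e).eq_zero_of_moments_eq_zero (hedge e))
  have hgreen := fun v (hv : ContDiff ℝ 1 v) =>
    integral_mdiv_dotProduct_add_eq_zero hdivthm hτC1 hτn hv
  have hRM : ∀ r ∈ RMset xC, ∫ x in E, mdiv (fun x => C (sgrad w x)) x ⬝ᵥ r x = 0 := by
    rintro _ ⟨a, b, rfl⟩
    have hrigid x := sum_mul_pd_rigid_eq_zero (hsymm x) xC a b x
    simpa only [hrigid, add_zero] using hgreen _ (contDiff_rigid xC a b)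
  have hdiv := eqOn_zero_of_setIntegral_dotProduct_self_eq_zero hEo hEb.isCompact_closure
    (continuous_mdiv hτC1) (hinterior _ hτ_div hRM)
  have henergy : ∫ x in E, frob (C (sgrad w x)) (sgrad w x) = 0 := by
    rw [← hgreen w (hw.of_le one_le_two)]
    refine setIntegral_congr_fun hEo.measurableSet fun x hx => ?_
    simp [hdiv hx, frob_sgrad_of_transpose_eq (hsymm x)]
  intro x hx
  show C (sgrad w x) = 0
  rw [eqOn_zero_of_setIntegral_frob_eq_zero hEo hEb hCpos
    (fun i j => (contDiff_sgrad_apply (m := 0) hw (by norm_num) i j).continuous) (sgrad_transpose w)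
    henergy hx, Pi.zero_apply, map_zero]

/-- unisolvence of the local stress degrees of freedom.  If
τ_h ∈ Σ_h(E) has vanishing edge moments of its normal trace against P_k(e)² on
every edge and vanishing interior moments of its divergence against RM_k^⊥(E),
then τ_h = 0.  The polygon E (open, bounded, of positive measure, with centroid
x_C) has edges parametrized by edgeParam (A e) (B e) with scaled outward
normals nu e, and the divergence theorem holds on E. -/
theorem unisolvence_local_stress_dofs
    (k : ℕ) (hk : 1 ≤ k) (nE : ℕ) (hnE : 3 ≤ nE)
    (E : Set Pt) (hEm : MeasurableSet E) (hEo : IsOpen E)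
    (hEb : Bornology.IsBounded E) (hEpos : 0 < volume E) (xC : Pt)
    (A B nu : Fin nE → Pt)
    (hdivthm : ∀ F : Pt → Pt, ContDiff ℝ 1 F →
      (∫ x in E, ∑ j, pd j (fun y => F y j) x) =
        ∑ e : Fin nE, ∫ t in (0:ℝ)..1, F (edgeParam (A e) (B e) t) ⬝ᵥ nu e)
    (C : M2 →ₗ[ℝ] M2)
    (hCsymval : ∀ σ : M2, σᵀ = σ → (C σ)ᵀ = C σ)
    (hCpos : ∀ σ : M2, σᵀ = σ → σ ≠ 0 → 0 < frob (C σ) σ)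
    (τ : Pt → M2) (hτ : InSigmaH k A B nu C τ)
    (hedge : ∀ e : Fin nE, ∀ q : Fin 2 → Polynomial ℝ, (∀ i, (q i).natDegree ≤ k) →
      (∫ t in (0:ℝ)..1,
        ((τ (edgeParam (A e) (B e) t)).mulVec (nu e)) ⬝ᵥ (fun i => (q i).eval t)) = 0)
    (hinterior : ∀ ψ : Pt → Pt, IsVPoly k ψ →
      (∀ r ∈ RMset xC, ∫ x in E, ψ x ⬝ᵥ r x = 0) →
      (∫ x in E, (mdiv τ x) ⬝ᵥ ψ x) = 0) :
    ∀ x ∈ E, τ x = 0 :=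
  unisolvence_local_stress_dofs_general k nE E hEo hEb xC A B nu hdivthm C hCsymval hCpos τ hτ hedge
    hinterior
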